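/- arXiv:0705.3631 — 7 statements merged into one kernel-verified Lean document; each statement's English description precedes it below -/
import Mathlib

section
/- Let N, s₁, s₂ be positive integers and let a = (a₁,a₂), b = (b₁,b₂) ∈ ℕ² be distinct vectors with a₁+a₂ = b₁+b₂ and a₁s₁ + a₂s₂ ≡ b₁s₁ + b₂s₂ (mod N). If the common value l = a₁+a₂ is minimal among all such pairs of distinct vectors, then {a, b} = {(l,0), (0,l)}. -/
/-!
If `b₁ < a₁`, then `b` is obtained from `a` by trading `d = a₁ - b₁` steps of `s₁` for steps
of `s₂`, so `d • s₁ ≡ d • s₂ (mod N)` and the pure paths `(d, 0)`, `(0, d)` form a tie of length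
`d ≤ a₁ + a₂`. Minimality forces `d = a₁ + a₂`, i.e. `a₂ = 0` and `b₁ = 0`.
-/

theorem Nat.ModEq.mul_sub_of_tie {N s₁ s₂ : ℕ} {a b : ℕ × ℕ} (hle : b.1 ≤ a.1)
    (hlen : a.1 + a.2 = b.1 + b.2)
    (hcong : a.1 * s₁ + a.2 * s₂ ≡ b.1 * s₁ + b.2 * s₂ [MOD N]) :
    (a.1 - b.1) * s₁ ≡ (a.1 - b.1) * s₂ [MOD N] := by
  obtain ⟨d, ha₁⟩ := Nat.exists_eq_add_of_le hle
  have hb₂ : b.2 = a.2 + d := by omega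
  rw [ha₁, hb₂] at hcong
  rw [ha₁, Nat.add_sub_cancel_left]
  refine Nat.ModEq.add_left_cancel' (b.1 * s₁ + a.2 * s₂) ?_
  convert hcong using 1 <;> ring

theorem stmt3_general (N s₁ s₂ : ℕ)
    (a b : ℕ × ℕ) (hab : a ≠ b) (hlen : a.1 + a.2 = b.1 + b.2)
    (hcong : a.1 * s₁ + a.2 * s₂ ≡ b.1 * s₁ + b.2 * s₂ [MOD N])
    (hmin : ∀ a' b' : ℕ × ℕ, a' ≠ b' → a'.1 + a'.2 = b'.1 + b'.2 →
      a'.1 * s₁ + a'.2 * s₂ ≡ b'.1 * s₁ + b'.2 * s₂ [MOD N] →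
      a.1 + a.2 ≤ a'.1 + a'.2) :
    ({a, b} : Set (ℕ × ℕ)) = {(a.1 + a.2, 0), (0, a.1 + a.2)} := by
  wlog hlt : b.1 < a.1 generalizing a b
  · rcases (not_lt.1 hlt).lt_or_eq with hlt | heq
    · have hswap := this b a hab.symm hlen.symm hcong.symm (fun a' b' h₁ h₂ h₃ => by
        rw [← hlen]; exact hmin a' b' h₁ h₂ h₃) hlt
      rwa [Set.pair_comm, ← hlen] at hswap
    · exact absurd (Prod.ext heq (by omega)) hab
  have hpure := Nat.ModEq.mul_sub_of_tie hlt.le hlen hcong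
  have hle : a.1 + a.2 ≤ a.1 - b.1 := by
    simpa using hmin (a.1 - b.1, 0) (0, a.1 - b.1) (by simp; omega) (by simp) (by simpa using hpure)
  have ha : a = (a.1 + a.2, 0) := Prod.ext (by omega) (by simp; omega)
  have hb : b = (0, a.1 + a.2) := Prod.ext (by simp; omega) (by simp; omega)
  rw [ha, hb]
  simp

theorem stmt3 (N s₁ s₂ : ℕ) (hN : 0 < N) (hs₁ : 0 < s₁) (hs₂ : 0 < s₂)
    (a b : ℕ × ℕ) (hab : a ≠ b) (hlen : a.1 + a.2 = b.1 + b.2)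
    (hcong : a.1 * s₁ + a.2 * s₂ ≡ b.1 * s₁ + b.2 * s₂ [MOD N])
    (hmin : ∀ a' b' : ℕ × ℕ, a' ≠ b' → a'.1 + a'.2 = b'.1 + b'.2 →
      a'.1 * s₁ + a'.2 * s₂ ≡ b'.1 * s₁ + b'.2 * s₂ [MOD N] →
      a.1 + a.2 ≤ a'.1 + a'.2) :
    ({a, b} : Set (ℕ × ℕ)) = {(a.1 + a.2, 0), (0, a.1 + a.2)} :=
  stmt3_general N s₁ s₂ a b hab hlen hcong hmin
end

section
/- Let q ≥ 1, N = 1+q+q², and let S = {(x,y,z) ∈ ℤ³ : x+y+z = 0, y+(q+1)z ≡ 0 (mod N), x ≤ 0, y ≥ 0, z ≥ 0}. Every nonzero element (x,y,z) ∈ S satisfies y + (q+1)z ≥ N, and the elements with y + (q+1)z = N are exactly the q+1 vectors (−q−1,1,q) + i·(−q, q+1, −1) for i = 0, 1, …, q. -/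
theorem stmt11 (q : ℕ) (hq : 1 ≤ q) (N : ℕ) (hNdef : N = 1 + q + q ^ 2)
    (S : Set (ℤ × ℤ × ℤ))
    (hSdef : S = {p : ℤ × ℤ × ℤ | p.1 + p.2.1 + p.2.2 = 0 ∧
      (N : ℤ) ∣ p.2.1 + (q + 1) * p.2.2 ∧ p.1 ≤ 0 ∧ 0 ≤ p.2.1 ∧ 0 ≤ p.2.2}) :
    (∀ p ∈ S, p ≠ 0 → (N : ℤ) ≤ p.2.1 + (q + 1) * p.2.2) ∧
      (∀ p : ℤ × ℤ × ℤ,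
        (p ∈ S ∧ p.2.1 + (q + 1) * p.2.2 = (N : ℤ)) ↔
          ∃ i : ℕ, i ≤ q ∧
            p = (-(q : ℤ) - 1 + (i : ℤ) * (-(q : ℤ)),
                 1 + (i : ℤ) * ((q : ℤ) + 1),
                 (q : ℤ) + (i : ℤ) * (-1))) := by
  subst hSdef
  have hqz : (1:ℤ) ≤ (q:ℤ) := by exact_mod_cast hq
  have hNz : (N:ℤ) = 1 + (q:ℤ) + (q:ℤ)^2 := by
    rw [hNdef]; push_cast; ring
  have hNpos : (0:ℤ) < (N:ℤ) := by rw [hNz]; nlinarith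
  constructor
  · rintro ⟨x, y, z⟩ ⟨hsum, ⟨k, hk⟩, hx, hy, hz⟩ hne
    simp only at *
    have hk0 : 0 < k := by
      rcases lt_or_ge 0 k with h | h
      · exact h
      · exfalso
        have hle : y + ((q:ℤ)+1)*z ≤ 0 := by
          rw [hk]; exact mul_nonpos_of_nonneg_of_nonpos hNpos.le h
        have hy0 : y = 0 := by nlinarith
        have hz0 : z = 0 := by nlinarith
        have hx0 : x = 0 := by omega
        exact hne (by simp [Prod.ext_iff, hx0, hy0, hz0])
    calc (N:ℤ) = (N:ℤ) * 1 := by ring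
      _ ≤ (N:ℤ) * k := by exact mul_le_mul_of_nonneg_left hk0 hNpos.le
      _ = y + ((q:ℤ)+1)*z := hk.symm
  · rintro ⟨x, y, z⟩
    constructor
    · rintro ⟨⟨hsum, hdvd, hx, hy, hz⟩, hN⟩
      simp only at *
      rw [hNz] at hN
      have hzq : z ≤ (q:ℤ) := by
        by_contra h
        push_neg at h
        have h1 : (q:ℤ) + 1 ≤ z := by omega
        have : ((q:ℤ)+1) * ((q:ℤ)+1) ≤ ((q:ℤ)+1) * z :=
          mul_le_mul_of_nonneg_left h1 (by linarith)
        nlinarith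
      refine ⟨((q:ℤ) - z).toNat, ?_, ?_⟩
      · omega
      · have hi : ((((q:ℤ) - z).toNat : ℤ)) = (q:ℤ) - z := Int.toNat_of_nonneg (by omega)
        have hzfin : z = (q:ℤ) + ((((q:ℤ) - z).toNat : ℤ)) * (-1) := by rw [hi]; ring
        have hyfin : y = 1 + ((((q:ℤ) - z).toNat : ℤ)) * ((q:ℤ) + 1) := by
          rw [hi]; linear_combination hN
        have hxfin : x = -(q:ℤ) - 1 + ((((q:ℤ) - z).toNat : ℤ)) * (-(q:ℤ)) := by
          rw [hi]; linear_combination hsum - hyfin - hzfin + hi * (-(q:ℤ))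
        exact Prod.ext hxfin (Prod.ext hyfin hzfin)
    · rintro ⟨i, hi, hp⟩
      obtain ⟨hxe, hye, hze⟩ : x = -(q:ℤ) - 1 + (i:ℤ) * (-(q:ℤ)) ∧ y = 1 + (i:ℤ) * ((q:ℤ)+1) ∧ z = (q:ℤ) + (i:ℤ) * (-1) := by
        simpa [Prod.ext_iff] using hp
      subst hxe hye hze
      have hiz : (i:ℤ) ≤ (q:ℤ) := by exact_mod_cast hi
      have hi0 : (0:ℤ) ≤ (i:ℤ) := Int.natCast_nonneg i
      refine ⟨⟨by ring, ⟨1, by rw [hNz]; ring⟩, ?_, ?_, ?_⟩, ?_⟩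
      · show -(q:ℤ) - 1 + (i:ℤ) * (-(q:ℤ)) ≤ 0
        nlinarith
      · show (0:ℤ) ≤ 1 + (i:ℤ) * ((q:ℤ)+1)
        nlinarith
      · show (0:ℤ) ≤ (q:ℤ) + (i:ℤ) * (-1)
        linarith
      simp only
      rw [hNz]; ring
end

section
/- Let q ≥ 1, N = 1+q+q², and S = {(x,y,z) ∈ ℤ³ : x+y+z = 0, y+(q+1)z ≡ 0 (mod N), x ≤ 0, y ≥ 0, z ≥ 0}. If b = (−b₂−b₃, b₂, b₃) ∈ S satisfies b₂ + (q+1)·b₃ ≥ 2N and b ≠ (−N, 0, N), then b is the sum of two nonzero elements of S. Specifically: if b₂ > 0 and b₃ ≥ q, then b − (−q−1, 1, q) ∈ S; and if b₃ < q (whence b₂ > N), then b − (−N, N, 0) ∈ S. -/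
theorem stmt12 (q : ℕ) (hq : 1 ≤ q) (N : ℕ) (hNdef : N = 1 + q + q ^ 2)
    (S : Set (ℤ × ℤ × ℤ))
    (hSdef : S = {p : ℤ × ℤ × ℤ | p.1 + p.2.1 + p.2.2 = 0 ∧
      (N : ℤ) ∣ p.2.1 + (q + 1) * p.2.2 ∧ p.1 ≤ 0 ∧ 0 ≤ p.2.1 ∧ 0 ≤ p.2.2})
    (b₂ b₃ : ℤ) (hb : ((-b₂ - b₃, b₂, b₃) : ℤ × ℤ × ℤ) ∈ S)
    (h2N : 2 * (N : ℤ) ≤ b₂ + (q + 1) * b₃)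
    (hne : ((-b₂ - b₃, b₂, b₃) : ℤ × ℤ × ℤ) ≠ (-(N : ℤ), 0, (N : ℤ))) :
    (∃ u v : ℤ × ℤ × ℤ, u ∈ S ∧ v ∈ S ∧ u ≠ 0 ∧ v ≠ 0 ∧
        ((-b₂ - b₃, b₂, b₃) : ℤ × ℤ × ℤ) = u + v) ∧
      (0 < b₂ → (q : ℤ) ≤ b₃ →
        ((-b₂ - b₃, b₂, b₃) : ℤ × ℤ × ℤ) - (-(q : ℤ) - 1, 1, (q : ℤ)) ∈ S) ∧
      (b₃ < (q : ℤ) → (N : ℤ) < b₂ ∧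
        ((-b₂ - b₃, b₂, b₃) : ℤ × ℤ × ℤ) - (-(N : ℤ), (N : ℤ), 0) ∈ S) := by
  have memS : ∀ x y z : ℤ, x + y + z = 0 → (N:ℤ) ∣ y + (q+1)*z → x ≤ 0 → 0 ≤ y → 0 ≤ z →
      ((x, y, z) : ℤ × ℤ × ℤ) ∈ S := by
    intro x y z h1 h2 h3 h4 h5
    rw [hSdef]
    exact ⟨h1, h2, h3, h4, h5⟩
  obtain ⟨hsum, hdvd, hx, hy, hz⟩ := hSdef ▸ hb
  dsimp only at hsum hdvd hx hy hz
  have hqz : (1:ℤ) ≤ q := by exact_mod_cast hq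
  have hNz : (N:ℤ) = 1 + q + q ^ 2 := by exact_mod_cast congrArg (Nat.cast : ℕ → ℤ) hNdef
  have hNpos : (0:ℤ) < N := by rw [hNz]; nlinarith
  -- the second clause
  have mem1 : 0 < b₂ → (q : ℤ) ≤ b₃ →
      ((-b₂ - b₃, b₂, b₃) : ℤ × ℤ × ℤ) - (-(q : ℤ) - 1, 1, (q : ℤ)) ∈ S := by
    intro h1 h2
    rw [Prod.mk_sub_mk, Prod.mk_sub_mk]
    refine memS _ _ _ (by ring) ?_ (by linarith) (by linarith) (by linarith)
    have heq : (b₂ - 1) + ((q:ℤ) + 1) * (b₃ - q) = (b₂ + (q + 1) * b₃) - N := by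
      rw [hNz]; ring
    rw [heq]
    exact dvd_sub hdvd (dvd_refl (N:ℤ))
  -- b₃ < q implies N < b₂
  have hb2big : b₃ < (q:ℤ) → (N:ℤ) < b₂ := by
    intro h3
    nlinarith [hNz, h2N]
  have mem2 : b₃ < (q : ℤ) →
      ((-b₂ - b₃, b₂, b₃) : ℤ × ℤ × ℤ) - (-(N : ℤ), (N : ℤ), 0) ∈ S := by
    intro h3
    have h2 := hb2big h3
    rw [Prod.mk_sub_mk, Prod.mk_sub_mk]
    refine memS _ _ _ (by ring) ?_ (by linarith) (by linarith) (by simpa using hz)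
    have heq : (b₂ - (N:ℤ)) + ((q:ℤ) + 1) * (b₃ - 0) = (b₂ + (q + 1) * b₃) - N := by ring
    rw [heq]
    exact dvd_sub hdvd (dvd_refl (N:ℤ))
  refine ⟨?_, mem1, fun h3 => ⟨hb2big h3, mem2 h3⟩⟩
  -- existence
  by_cases h3 : b₃ < (q:ℤ)
  · refine ⟨(-(N:ℤ), (N:ℤ), 0), ((-b₂ - b₃, b₂, b₃) : ℤ × ℤ × ℤ) - (-(N:ℤ), (N:ℤ), 0),
      memS _ _ _ (by ring) (by simpa using dvd_refl (N:ℤ)) (by linarith) (by linarith)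
        le_rfl,
      mem2 h3, ?_, ?_, by abel⟩
    · simp only [ne_eq, Prod.ext_iff, Prod.fst_zero, Prod.snd_zero]
      push_neg; intro h; exfalso; linarith
    · simp only [ne_eq, Prod.mk_sub_mk, Prod.ext_iff, Prod.fst_zero, Prod.snd_zero]
      push_neg; intro _ h
      have := hb2big h3
      exfalso; linarith [sub_eq_zero.mp h]
  · push_neg at h3
    by_cases h2 : 0 < b₂
    · refine ⟨(-(q:ℤ) - 1, 1, (q:ℤ)), ((-b₂ - b₃, b₂, b₃) : ℤ × ℤ × ℤ) - (-(q:ℤ) - 1, 1, (q:ℤ)),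
        memS _ _ _ (by ring) ⟨1, by rw [hNz]; ring⟩ (by linarith) (by norm_num) (by linarith),
        mem1 h2 h3, ?_, ?_, by abel⟩
      · simp only [ne_eq, Prod.ext_iff, Prod.fst_zero, Prod.snd_zero]
        push_neg; intro _; norm_num
      · simp only [ne_eq, Prod.mk_sub_mk, Prod.ext_iff, Prod.fst_zero, Prod.snd_zero]
        push_neg; intro _ hm hl
        have hm' : b₂ = 1 := by linarith [sub_eq_zero.mp hm]
        have hl' : b₃ = q := by linarith [sub_eq_zero.mp hl]
        rw [hm', hl', hNz] at h2N; nlinarith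
    · -- b₂ = 0
      have hb2 : b₂ = 0 := le_antisymm (not_lt.mp h2) hy
      have hcop1 : IsCoprime ((q:ℤ) + 1) ((N:ℤ)) := ⟨-(q:ℤ), 1, by rw [hNz]; ring⟩
      have hcop : IsCoprime ((N:ℤ)) ((q:ℤ) + 1) := hcop1.symm
      have hdvd3 : (N:ℤ) ∣ b₃ := by
        apply hcop.dvd_of_dvd_mul_left
        rw [hb2, zero_add] at hdvd
        exact hdvd
      obtain ⟨k, hk⟩ := hdvd3
      have hk0 : 0 ≤ k := by nlinarith
      have hk2 : 2 ≤ k := by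
        rcases lt_or_ge k 2 with h | h
        · exfalso
          interval_cases k
          · rw [hb2, hk] at h2N; nlinarith
          · apply hne
            rw [hb2, hk]
            norm_num
        · exact h
      refine ⟨(-(N:ℤ), 0, (N:ℤ)), (-((N:ℤ)*(k-1)), 0, (N:ℤ)*(k-1)),
        memS _ _ _ (by ring) ⟨(q:ℤ)+1, by ring⟩ (by linarith) le_rfl
          (by linarith),
        memS _ _ _ (by ring) ⟨((q:ℤ)+1)*(k - 1), by ring⟩ (by nlinarith) le_rfl (by nlinarith),
        ?_, ?_, ?_⟩
      · simp only [ne_eq, Prod.ext_iff, Prod.fst_zero, Prod.snd_zero]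
        push_neg; intro h; exfalso; linarith
      · simp only [ne_eq, Prod.ext_iff, Prod.fst_zero, Prod.snd_zero]
        push_neg; intro h; exfalso; nlinarith
      · rw [hb2, hk, Prod.mk_add_mk, Prod.mk_add_mk]
        refine Prod.ext ?_ (Prod.ext ?_ ?_) <;> simp <;> ring
end

section
/- Let q ≥ 1 with 3 ∤ (q-1) and N = 1+q+q². The Hilbert basis of the semigroup S = L₀ ∩ {x ≤ 0, y ≥ 0, z ≥ 0}, where L₀ = {(x,y,z) : x+qy+q²z ≡ 0 (mod N), x+y+z=0}, consists of exactly q+2 elements, namely (−N, 0, N) together with (−q−1,1,q) + i·(−q, q+1, −1) for i = 0, …, q. -/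
section Aux

variable (q : ℕ)

private lemma aux_not3 (hq : 1 ≤ q) (h3 : ¬ (3 ∣ (q - 1))) :
    ¬ (3:ℤ) ∣ ((1 + q + q ^ 2 : ℕ) : ℤ) := by
  intro h
  apply h3
  have hN : ((1 + q + q ^ 2 : ℕ) : ℤ) = ((q:ℤ) - 1)^2 + 3 * q := by push_cast; ring
  rw [hN] at h
  have h2 : (3:ℤ) ∣ ((q:ℤ) - 1)^2 := by
    have := dvd_sub h (Dvd.intro (q:ℤ) rfl)
    simpa using this
  have h1 : (3:ℤ) ∣ ((q:ℤ) - 1) := by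
    have := Int.prime_three.dvd_of_dvd_pow (n := 2) (by simpa [sq] using h2)
    exact this
  omega

private lemma aux_key (hq : 1 ≤ q) (h3 : ¬ (3 ∣ (q - 1))) (m : ℤ)
    (h : ((1 + q + q ^ 2 : ℕ) : ℤ) ∣ ((q:ℤ) - 1) * m) :
    ((1 + q + q ^ 2 : ℕ) : ℤ) ∣ m := by
  set N : ℤ := ((1 + q + q ^ 2 : ℕ) : ℤ) with hN
  have hNval : N = 1 + (q:ℤ) + (q:ℤ)^2 := by push_cast [hN]; ring
  have h3m : N ∣ 3 * m := by
    have h1 : N ∣ ((q:ℤ) + 2) * (((q:ℤ) - 1) * m) := Dvd.dvd.mul_left h _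
    have h2 : ((q:ℤ) + 2) * (((q:ℤ) - 1) * m) = N * m - 3 * m := by rw [hNval]; ring
    rw [h2] at h1
    have := dvd_sub (Dvd.intro m rfl) h1
    simpa using this
  have hcop : IsCoprime (3:ℤ) N := Int.prime_three.coprime_iff_not_dvd.mpr (aux_not3 q hq h3)
  exact hcop.symm.dvd_of_dvd_mul_left h3m

end Aux

theorem stmt13 (q : ℕ) (hq : 1 ≤ q) (h3 : ¬ (3 ∣ (q - 1))) (N : ℕ)
    (hNdef : N = 1 + q + q ^ 2)
    (S : Set (ℤ × ℤ × ℤ))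
    (hSdef : S = {p : ℤ × ℤ × ℤ | (N : ℤ) ∣ p.1 + q * p.2.1 + q ^ 2 * p.2.2 ∧
      p.1 + p.2.1 + p.2.2 = 0 ∧ p.1 ≤ 0 ∧ 0 ≤ p.2.1 ∧ 0 ≤ p.2.2}) :
    {p ∈ S | p ≠ 0 ∧ ¬ ∃ u v : ℤ × ℤ × ℤ, u ∈ S ∧ v ∈ S ∧ u ≠ 0 ∧ v ≠ 0 ∧ p = u + v} =
        insert ((-(N : ℤ), 0, (N : ℤ)) : ℤ × ℤ × ℤ)
          {p : ℤ × ℤ × ℤ | ∃ i : ℕ, i ≤ q ∧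
            p = (-(q : ℤ) - 1 + (i : ℤ) * (-(q : ℤ)),
                 1 + (i : ℤ) * ((q : ℤ) + 1),
                 (q : ℤ) + (i : ℤ) * (-1))} ∧
      {p ∈ S | p ≠ 0 ∧ ¬ ∃ u v : ℤ × ℤ × ℤ, u ∈ S ∧ v ∈ S ∧ u ≠ 0 ∧ v ≠ 0 ∧
        p = u + v}.ncard = q + 2 := by
  have hNZ : (N:ℤ) = 1 + (q:ℤ) + (q:ℤ)^2 := by subst hNdef; push_cast; ring
  have hNpos : 0 < (N:ℤ) := by rw [hNZ]; positivity
  -- valuation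
  set val : ℤ × ℤ × ℤ → ℤ := fun p => p.2.1 + ((q:ℤ) + 1) * p.2.2 with hval
  -- membership characterization
  have hmem : ∀ p : ℤ × ℤ × ℤ, p ∈ S ↔
      ((N:ℤ) ∣ val p ∧ p.1 = -(p.2.1 + p.2.2) ∧ 0 ≤ p.2.1 ∧ 0 ≤ p.2.2) := by
    intro p
    rw [hSdef]
    simp only [Set.mem_setOf_eq, hval]
    constructor
    · rintro ⟨hdvd, hsum, _, hy, hz⟩
      have hx : p.1 = -(p.2.1 + p.2.2) := by linarith
      refine ⟨?_, hx, hy, hz⟩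
      have heq : p.1 + (q:ℤ) * p.2.1 + (q:ℤ)^2 * p.2.2
          = ((q:ℤ) - 1) * (p.2.1 + ((q:ℤ) + 1) * p.2.2) := by rw [hx]; ring
      rw [heq] at hdvd
      exact hNdef ▸ aux_key q hq h3 _ (hNdef ▸ hdvd)
    · rintro ⟨hdvd, hx, hy, hz⟩
      refine ⟨?_, by linarith, by linarith, hy, hz⟩
      have heq : p.1 + (q:ℤ) * p.2.1 + (q:ℤ)^2 * p.2.2
          = ((q:ℤ) - 1) * (p.2.1 + ((q:ℤ) + 1) * p.2.2) := by rw [hx]; ring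
      rw [heq]
      exact Dvd.dvd.mul_left hdvd _
  -- nonzero elements have valuation ≥ N
  have hvalpos : ∀ u : ℤ × ℤ × ℤ, u ∈ S → u ≠ 0 → (N:ℤ) ≤ val u := by
    intro u hu hne
    obtain ⟨hdvd, hx, hy, hz⟩ := (hmem u).mp hu
    have hnn : 0 ≤ val u := by
      simp only [hval]
      have : (0:ℤ) ≤ (q:ℤ) + 1 := by positivity
      nlinarith
    rcases eq_or_lt_of_le hnn with h0 | hpos
    · exfalso
      apply hne
      have hy0 : u.2.1 = 0 ∧ u.2.2 = 0 := by
        simp only [hval] at h0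
        constructor <;> nlinarith [Int.natCast_nonneg q]
      have hx0 : u.1 = 0 := by rw [hx, hy0.1, hy0.2]; ring
      exact Prod.ext hx0 (Prod.ext hy0.1 hy0.2)
    · exact Int.le_of_dvd hpos hdvd
  -- the generators
  set f : ℕ → ℤ × ℤ × ℤ := fun i =>
    (-(q : ℤ) - 1 + (i : ℤ) * (-(q : ℤ)), 1 + (i : ℤ) * ((q : ℤ) + 1),
      (q : ℤ) + (i : ℤ) * (-1)) with hf
  have hfval : ∀ i : ℕ, i ≤ q → val (f i) = (N:ℤ) := by
    intro i hi
    simp only [hf, hval, hNZ]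
    ring
  have hfS : ∀ i : ℕ, i ≤ q → f i ∈ S := by
    intro i hi
    rw [hmem]
    refine ⟨hfval i hi ▸ dvd_refl _, by simp [hf]; ring, by positivity, ?_⟩
    simp only [hf]
    have : (i:ℤ) ≤ q := by exact_mod_cast hi
    linarith
  have hfne : ∀ i : ℕ, f i ≠ 0 := by
    intro i h
    have h2 : (1 + (i : ℤ) * ((q : ℤ) + 1)) = 0 := congrArg (fun p => p.2.1) h
    have : (0:ℤ) ≤ (i:ℤ) * ((q:ℤ) + 1) := by positivity
    linarith
  set a : ℤ × ℤ × ℤ := ((-(N : ℤ), 0, (N : ℤ)) : ℤ × ℤ × ℤ) with ha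
  have haS : a ∈ S := by
    rw [hmem]
    refine ⟨⟨(q:ℤ)+1, by simp [ha, hval]; ring⟩, by simp [ha], le_refl _, le_of_lt hNpos⟩
  have hane : a ≠ 0 := by
    intro h
    have : -(N:ℤ) = 0 := congrArg (fun p => p.1) h
    omega
  -- coprimality of N and q+1
  have hcop : IsCoprime ((N:ℤ)) ((q:ℤ) + 1) := ⟨1, -(q:ℤ), by rw [hNZ]; ring⟩
  -- Main set equality
  have hsetEq : {p ∈ S | p ≠ 0 ∧ ¬ ∃ u v : ℤ × ℤ × ℤ, u ∈ S ∧ v ∈ S ∧ u ≠ 0 ∧ v ≠ 0 ∧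
        p = u + v} = insert a {p : ℤ × ℤ × ℤ | ∃ i : ℕ, i ≤ q ∧ p = f i} := by
    ext p
    simp only [Set.mem_setOf_eq, Set.mem_insert_iff]
    constructor
    · rintro ⟨hpS, hpne, hindec⟩
      obtain ⟨hdvd, hx, hy, hz⟩ := (hmem p).mp hpS
      have hvge : (N:ℤ) ≤ val p := hvalpos p hpS hpne
      rcases eq_or_lt_of_le hy with hy0 | hy1
      · -- y = 0 case
        have hdz : (N:ℤ) ∣ p.2.2 := by
          apply hcop.dvd_of_dvd_mul_left
          have hv : val p = ((q:ℤ)+1) * p.2.2 := by simp only [hval, ← hy0]; ring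
          rw [← hv]; exact hdvd
        have hzpos : 0 < p.2.2 := by
          by_contra hc
          push_neg at hc
          have hz0 : p.2.2 = 0 := le_antisymm hc hz
          have : val p = 0 := by simp only [hval, ← hy0, hz0]; ring
          omega
        have hzgeN : (N:ℤ) ≤ p.2.2 := Int.le_of_dvd hzpos hdz
        rcases eq_or_lt_of_le hzgeN with hzN | hzgt
        · left
          rw [ha, Prod.ext_iff, Prod.ext_iff]
          exact ⟨by rw [hx, ← hy0, ← hzN]; ring, by simp [← hy0], hzN.symm⟩
        · exfalso
          apply hindec
          set r : ℤ × ℤ × ℤ := (-(p.2.2 - (N:ℤ)), 0, p.2.2 - (N:ℤ)) with hr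
          refine ⟨a, r, haS, ?_, hane, ?_, ?_⟩
          · rw [hmem]
            refine ⟨?_, ?_, ?_, ?_⟩
            · have hv : val r = ((q:ℤ)+1) * (p.2.2 - (N:ℤ)) := by
                simp only [hval, hr]; ring
              rw [hv]
              exact Dvd.dvd.mul_left (dvd_sub hdz (dvd_refl _)) _
            · simp only [hr]; ring
            · simp only [hr]; exact le_refl _
            · simp only [hr]; omega
          · intro h
            have : p.2.2 - (N:ℤ) = 0 := congrArg (fun r => r.2.2) h
            omega
          · rw [ha, hr, Prod.ext_iff, Prod.ext_iff]
            refine ⟨by rw [hx, ← hy0]; simp; ring, by simp [← hy0], by simp⟩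
      · -- y ≥ 1 case
        right
        rcases eq_or_lt_of_le hvge with hvN | hv2
        · -- val p = N
          have hzq : p.2.2 ≤ (q:ℤ) := by
            by_contra hc
            push_neg at hc
            have : (q:ℤ) + 1 ≤ p.2.2 := hc
            have : val p ≥ 1 + ((q:ℤ)+1)*((q:ℤ)+1) := by simp only [hval]; nlinarith
            rw [← hvN] at this
            nlinarith [hNZ]
          obtain ⟨i, hi⟩ : ∃ i : ℕ, (i:ℤ) = (q:ℤ) - p.2.2 := ⟨((q:ℤ) - p.2.2).toNat, by omega⟩
          refine ⟨i, by omega, ?_⟩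
          have hyv : p.2.1 = 1 + (i:ℤ) * ((q:ℤ)+1) := by
            have : p.2.1 = val p - ((q:ℤ)+1)*p.2.2 := by simp only [hval]; ring
            rw [this, ← hvN, hNZ, hi]; ring
          rw [Prod.ext_iff, Prod.ext_iff]
          simp only [hf]
          refine ⟨?_, hyv, by omega⟩
          rw [hx, hyv]
          have : p.2.2 = (q:ℤ) - i := by omega
          rw [this]; ring
        · -- val p ≥ 2N ; derive contradiction with indecomposability
          exfalso
          have hv2N : 2 * (N:ℤ) ≤ val p := by
            rcases hdvd with ⟨c, hc⟩
            have : 2 ≤ c := by nlinarith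
            nlinarith
          rcases le_or_gt (q:ℤ) p.2.2 with hzge | hzlt
          · -- subtract f 0
            apply hindec
            set r : ℤ × ℤ × ℤ := (p.1 + ((q:ℤ) + 1), p.2.1 - 1, p.2.2 - (q:ℤ)) with hr
            have hvr : val r = val p - (N:ℤ) := by
              simp only [hval, hr, hNZ]; ring
            refine ⟨f 0, r, hfS 0 (by omega), ?_, hfne 0, ?_, ?_⟩
            · rw [hmem]
              refine ⟨?_, ?_, ?_, ?_⟩
              · rw [hvr]; exact dvd_sub hdvd (dvd_refl _)
              · simp only [hr]; rw [hx]; ring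
              · simp only [hr]; omega
              · simp only [hr]; omega
            · intro h
              have : val r = 0 := by rw [h]; simp [hval]
              omega
            · rw [hf, hr, Prod.ext_iff, Prod.ext_iff]
              refine ⟨?_, ?_, ?_⟩ <;> (simp only [Prod.fst_add, Prod.snd_add]; push_cast; ring)
          · -- z < q : subtract f (q - z)
            apply hindec
            obtain ⟨i, hi⟩ : ∃ i : ℕ, (i:ℤ) = (q:ℤ) - p.2.2 := ⟨((q:ℤ) - p.2.2).toNat, by omega⟩
            have hiq : i ≤ q := by omega
            set r : ℤ × ℤ × ℤ := (-(val p - (N:ℤ)), val p - (N:ℤ), 0) with hr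
            refine ⟨f i, r, hfS i hiq, ?_, hfne i, ?_, ?_⟩
            · rw [hmem]
              refine ⟨?_, ?_, ?_, ?_⟩
              · have hvr : val r = val p - (N:ℤ) := by simp only [hval, hr]; ring
                rw [hvr]; exact dvd_sub hdvd (dvd_refl _)
              · simp only [hr]; ring
              · simp only [hr]; omega
              · simp only [hr]; exact le_refl _
            · intro h
              have : val r = 0 := by rw [h]; simp [hval]
              have hvr : val r = val p - (N:ℤ) := by simp only [hval, hr]; ring
              omega
            · rw [hf, hr, Prod.ext_iff, Prod.ext_iff]
              have hy2 : p.2.1 = val p - ((q:ℤ)+1) * p.2.2 := by simp only [hval]; ring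
              refine ⟨?_, ?_, ?_⟩
              · simp only [Prod.fst_add]
                rw [hx, hi, hNZ, hy2]; ring
              · simp only [Prod.snd_add, Prod.fst_add]
                rw [hy2, hi, hNZ]; ring
              · simp only [Prod.snd_add]
                rw [hi]; ring
    · rintro (hpa | ⟨i, hiq, hpi⟩)
      · subst hpa
        refine ⟨haS, hane, ?_⟩
        rintro ⟨u, v, huS, hvS, hune, hvne, heq⟩
        obtain ⟨hud, hux, huy, huz⟩ := (hmem u).mp huS
        obtain ⟨hvd, hvx, hvy, hvz⟩ := (hmem v).mp hvS
        have hy0 : u.2.1 = 0 ∧ v.2.1 = 0 := by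
          have : (0:ℤ) = u.2.1 + v.2.1 := congrArg (fun p => p.2.1) heq
          constructor <;> omega
        have hzsum : (N:ℤ) = u.2.2 + v.2.2 := congrArg (fun p => p.2.2) heq
        have hdu : (N:ℤ) ∣ u.2.2 := by
          apply hcop.dvd_of_dvd_mul_left
          have : val u = ((q:ℤ)+1) * u.2.2 := by simp only [hval, hy0.1]; ring
          rw [← this]; exact hud
        have hdv : (N:ℤ) ∣ v.2.2 := by
          apply hcop.dvd_of_dvd_mul_left
          have : val v = ((q:ℤ)+1) * v.2.2 := by simp only [hval, hy0.2]; ring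
          rw [← this]; exact hvd
        -- u.2.2 > 0 since u ≠ 0
        have huzpos : 0 < u.2.2 := by
          rcases eq_or_lt_of_le huz with h0 | h; swap; · exact h
          exfalso; apply hune
          have : u.1 = 0 := by rw [hux, hy0.1, ← h0]; ring
          exact Prod.ext this (Prod.ext hy0.1 h0.symm)
        have hvzpos : 0 < v.2.2 := by
          rcases eq_or_lt_of_le hvz with h0 | h; swap; · exact h
          exfalso; apply hvne
          have : v.1 = 0 := by rw [hvx, hy0.2, ← h0]; ring
          exact Prod.ext this (Prod.ext hy0.2 h0.symm)
        have h1 : (N:ℤ) ≤ u.2.2 := Int.le_of_dvd huzpos hdu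
        have h2 : (N:ℤ) ≤ v.2.2 := Int.le_of_dvd hvzpos hdv
        omega
      · subst hpi
        refine ⟨hfS i hiq, hfne i, ?_⟩
        rintro ⟨u, v, huS, hvS, hune, hvne, heq⟩
        have h1 : (N:ℤ) ≤ val u := hvalpos u huS hune
        have h2 : (N:ℤ) ≤ val v := hvalpos v hvS hvne
        have hadd : val (f i) = val u + val v := by
          rw [heq]; simp only [hval, Prod.snd_add, Prod.fst_add]; ring
        rw [hfval i hiq] at hadd
        omega
  refine ⟨?_, ?_⟩
  · rw [hsetEq]
  · rw [hsetEq]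
    have himg : {p : ℤ × ℤ × ℤ | ∃ i : ℕ, i ≤ q ∧ p = f i} = f '' Set.Iic q := by
      ext p
      simp only [Set.mem_setOf_eq, Set.mem_image, Set.mem_Iic]
      constructor
      · rintro ⟨i, h1, h2⟩; exact ⟨i, h1, h2.symm⟩
      · rintro ⟨i, h1, h2⟩; exact ⟨i, h1, h2.symm⟩
    rw [himg]
    have hinj : Set.InjOn f (Set.Iic q) := by
      intro i _ j _ hij
      have : (1 + (i:ℤ) * ((q:ℤ)+1)) = 1 + (j:ℤ) * ((q:ℤ)+1) :=
        congrArg (fun p => p.2.1) hij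
      have : (i:ℤ) = j := by
        have hq1 : (0:ℤ) < (q:ℤ) + 1 := by positivity
        nlinarith
      exact_mod_cast this
    have hfin : (f '' Set.Iic q).Finite := (Set.finite_Iic q).image f
    have hnotmem : a ∉ f '' Set.Iic q := by
      rintro ⟨i, _, hfi⟩
      have : (1 + (i:ℤ) * ((q:ℤ)+1)) = 0 := congrArg (fun p => p.2.1) hfi
      have : (0:ℤ) ≤ (i:ℤ) * ((q:ℤ)+1) := by positivity
      omega
    rw [Set.ncard_insert_of_notMem hnotmem hfin, Set.ncard_image_of_injOn hinj]
    have h1 : (Set.Iic q) = ↑(Finset.Iic q) := by ext x; simp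
    rw [h1, Set.ncard_coe_finset, Nat.card_Iic]
end

section
/- Let N, k, t, s₁, s₂, s₃ be positive integers with gcd(k, t) = 1, let a⁺, a⁻ ∈ ℕ³ with ‖a⁺‖₁ = ‖a⁻‖₁ < k, and suppose a⁺ ≠ a⁻ but a⁺·(t+ks₁, t+ks₂, t+ks₃) ≡ a⁻·(t+ks₁, t+ks₂, t+ks₃) (mod Nk). Then no c ∈ ℕ³ with ‖c‖₁ < ‖a⁺‖₁ satisfies c·(t+ks₁, t+ks₂, t+ks₃) ≡ a⁺·(t+ks₁, t+ks₂, t+ks₃) (mod Nk). In other words, a⁺ and a⁻ represent minimum routings to their common vertex in C_{Nk}(t+ks₁, t+ks₂, t+ks₃). -/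
/-!
Every generator `t + k sᵢ` is `≡ t (mod k)`, so a path of length `l` ends at a vertex `≡ l t (mod k)`.
Since `t` is invertible mod `k`, two paths to the same vertex of `C_{Nk}` have lengths congruent
mod `k`; when both lengths are below `k` they are equal, so no strictly shorter path exists.
-/

theorem add_mul_modEq_self (t k s : ℕ) : t + k * s ≡ t [MOD k] := by
  simp [Nat.ModEq]

theorem weighted_sum_modEq_length_mul {k t w₁ w₂ w₃ : ℕ} (hw₁ : w₁ ≡ t [MOD k])
    (hw₂ : w₂ ≡ t [MOD k]) (hw₃ : w₃ ≡ t [MOD k]) (x y z : ℕ) :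
    x * w₁ + y * w₂ + z * w₃ ≡ (x + y + z) * t [MOD k] := by
  rw [add_mul, add_mul]
  exact ((hw₁.mul_left x).add (hw₂.mul_left y)).add (hw₃.mul_left z)

theorem eq_of_mul_modEq_mul_of_lt {k t l l' : ℕ} (hkt : Nat.gcd k t = 1) (hl : l < k)
    (hl' : l' < k) (h : l * t ≡ l' * t [MOD k]) : l = l' :=
  (Nat.ModEq.cancel_right_of_coprime hkt h).eq_of_lt_of_lt hl hl'

theorem length_eq_of_weighted_sum_modEq {k t w₁ w₂ w₃ : ℕ} (hkt : Nat.gcd k t = 1)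
    (hw₁ : w₁ ≡ t [MOD k]) (hw₂ : w₂ ≡ t [MOD k]) (hw₃ : w₃ ≡ t [MOD k])
    (c a : ℕ × ℕ × ℕ) (hc : c.1 + c.2.1 + c.2.2 < k) (ha : a.1 + a.2.1 + a.2.2 < k)
    (h : c.1 * w₁ + c.2.1 * w₂ + c.2.2 * w₃ ≡ a.1 * w₁ + a.2.1 * w₂ + a.2.2 * w₃ [MOD k]) :
    c.1 + c.2.1 + c.2.2 = a.1 + a.2.1 + a.2.2 := by
  have weighted := weighted_sum_modEq_length_mul hw₁ hw₂ hw₃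
  exact eq_of_mul_modEq_mul_of_lt hkt hc ha
    (((weighted c.1 c.2.1 c.2.2).symm.trans h).trans (weighted a.1 a.2.1 a.2.2))

theorem stmt14_general (N k t s₁ s₂ s₃ : ℕ) (hkt : Nat.gcd k t = 1)
    (ap : ℕ × ℕ × ℕ)
    (hltk : ap.1 + ap.2.1 + ap.2.2 < k) :
    ∀ c : ℕ × ℕ × ℕ, c.1 + c.2.1 + c.2.2 < ap.1 + ap.2.1 + ap.2.2 →
      ¬ (c.1 * (t + k * s₁) + c.2.1 * (t + k * s₂) + c.2.2 * (t + k * s₃) ≡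
        ap.1 * (t + k * s₁) + ap.2.1 * (t + k * s₂) + ap.2.2 * (t + k * s₃) [MOD N * k]) := by
  intro c hlt hc
  exact hlt.ne <| length_eq_of_weighted_sum_modEq hkt (add_mul_modEq_self t k s₁)
    (add_mul_modEq_self t k s₂) (add_mul_modEq_self t k s₃) c ap (hlt.trans hltk) hltk
    (hc.of_mul_left N)

theorem stmt14 (N k t s₁ s₂ s₃ : ℕ) (hN : 0 < N) (hk : 0 < k) (ht : 0 < t)
    (hs₁ : 0 < s₁) (hs₂ : 0 < s₂) (hs₃ : 0 < s₃) (hkt : Nat.gcd k t = 1)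
    (ap am : ℕ × ℕ × ℕ)
    (hlen : ap.1 + ap.2.1 + ap.2.2 = am.1 + am.2.1 + am.2.2)
    (hltk : ap.1 + ap.2.1 + ap.2.2 < k)
    (hne : ap ≠ am)
    (hcong : ap.1 * (t + k * s₁) + ap.2.1 * (t + k * s₂) + ap.2.2 * (t + k * s₃) ≡
      am.1 * (t + k * s₁) + am.2.1 * (t + k * s₂) + am.2.2 * (t + k * s₃) [MOD N * k]) :
    ∀ c : ℕ × ℕ × ℕ, c.1 + c.2.1 + c.2.2 < ap.1 + ap.2.1 + ap.2.2 →
      ¬ (c.1 * (t + k * s₁) + c.2.1 * (t + k * s₂) + c.2.2 * (t + k * s₃) ≡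
        ap.1 * (t + k * s₁) + ap.2.1 * (t + k * s₂) + ap.2.2 * (t + k * s₃) [MOD N * k]) :=
  stmt14_general N k t s₁ s₂ s₃ hkt ap hltk
end

section
/- There is no monomial ordering ≺ on ℕ⁴ (a total order compatible with addition and well-founded) such that simultaneously (1,0,0,0)+(1,0,0,0) ≺ (0,0,1,0)+(0,0,1,0), (0,1,0,0)+(0,1,0,0) ≺ (0,0,0,1)+(0,0,0,1), and (0,0,1,0)+(0,0,0,1) ≺ (1,0,0,0)+(0,1,0,0). -/
/-! Adding the first two inequalities gives `x₁²x₂² ≺ x₃²x₄²`, squaring the third gives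
`x₃²x₄² ≺ x₁²x₂²`; transitivity then yields `m ≺ m`, impossible for a well-founded relation. -/

section TranslationInvariant

variable {M : Type*} [AddCommSemigroup M] {r : M → M → Prop}

theorem rel_add_add_of_translation_invariant [IsTrans M r]
    (hadd : ∀ a b c : M, r a b → r (a + c) (b + c)) {a b c d : M} (hab : r a b) (hcd : r c d) :
    r (a + c) (b + d) := by
  have hcd' : r (b + c) (b + d) := by simpa only [add_comm b] using hadd c d b hcd
  exact _root_.trans (hadd a b c hab) hcd'

theorem not_wellFounded_of_translation_invariant [IsTrans M r]
    (hadd : ∀ a b c : M, r a b → r (a + c) (b + c)) {a b c d : M}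
    (hac : r (a + a) (c + c)) (hbd : r (b + b) (d + d)) (hcd : r (c + d) (a + b)) :
    ¬ WellFounded r := by
  intro hwf
  have hlt : r ((a + a) + (b + b)) ((c + c) + (d + d)) :=
    rel_add_add_of_translation_invariant hadd hac hbd
  have hgt : r ((c + c) + (d + d)) ((a + a) + (b + b)) := by
    simpa only [add_add_add_comm] using rel_add_add_of_translation_invariant hadd hcd hcd
  exact hwf.irrefl.irrefl _ (_root_.trans hlt hgt)

end TranslationInvariant

theorem stmt16 :
    ¬ ∃ r : (ℕ × ℕ × ℕ × ℕ) → (ℕ × ℕ × ℕ × ℕ) → Prop,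
      IsTrichotomous (ℕ × ℕ × ℕ × ℕ) r ∧
      IsTrans (ℕ × ℕ × ℕ × ℕ) r ∧
      (∀ a b c : ℕ × ℕ × ℕ × ℕ, r a b → r (a + c) (b + c)) ∧
      WellFounded r ∧
      r ((1,0,0,0) + (1,0,0,0)) ((0,0,1,0) + (0,0,1,0)) ∧
      r ((0,1,0,0) + (0,1,0,0)) ((0,0,0,1) + (0,0,0,1)) ∧
      r ((0,0,1,0) + (0,0,0,1)) ((1,0,0,0) + (0,1,0,0)) := by
  rintro ⟨r, -, htrans, hadd, hwf, h13, h24, h34⟩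
  exact not_wellFounded_of_translation_invariant hadd h13 h24 h34 hwf
end

section
/- Let N, q, k, t be positive integers with N = 1+q+q², gcd(k, N) = 1, and gcd(t, k) = 1, and suppose 3 ∤ (q-1). Then gcd(t+k, t+qk, t+q²k, Nk) = 1; in particular the triple-loop network C_{Nk}(t+k, t+qk, t+q²k) is connected. -/
theorem stmt19 (N q k t : ℕ) (hq : 0 < q) (hk : 0 < k) (ht : 0 < t)
    (hNdef : N = 1 + q + q ^ 2) (hkN : Nat.gcd k N = 1) (htk : Nat.gcd t k = 1)
    (h3 : ¬ (3 ∣ (q - 1))) :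
    Nat.gcd (Nat.gcd (Nat.gcd (t + k) (t + q * k)) (t + q ^ 2 * k)) (N * k) = 1 := by
  set d := Nat.gcd (Nat.gcd (Nat.gcd (t + k) (t + q * k)) (t + q ^ 2 * k)) (N * k) with hd
  by_contra hne
  have hdpos : 0 < d := Nat.gcd_pos_of_pos_right _ (by subst hNdef; positivity)
  set p := Nat.minFac d with hp
  have hpp : p.Prime := Nat.minFac_prime hne
  have hpd : p ∣ d := Nat.minFac_dvd d
  have h1 : p ∣ t + k := hpd.trans ((Nat.gcd_dvd_left _ _).trans (Nat.gcd_dvd_left _ _) |>.trans (Nat.gcd_dvd_left _ _))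
  have h2 : p ∣ t + q * k := hpd.trans ((Nat.gcd_dvd_left _ _).trans (Nat.gcd_dvd_left _ _) |>.trans (Nat.gcd_dvd_right _ _))
  have hNk : p ∣ N * k := hpd.trans (Nat.gcd_dvd_right _ _)
  have hpk : ¬ p ∣ k := by
    intro hpk
    have hpt : p ∣ t := (Nat.dvd_add_right hpk).mp (by rwa [Nat.add_comm] at h1)
    have : p ∣ Nat.gcd t k := Nat.dvd_gcd hpt hpk
    rw [htk] at this
    exact absurd (Nat.le_of_dvd one_pos this) (not_le.mpr hpp.one_lt)
  have hsub : p ∣ (q - 1) * k := by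
    have : (t + q * k) - (t + k) = (q - 1) * k := by
      rw [Nat.add_sub_add_left, Nat.sub_mul, Nat.one_mul]
    exact this ▸ Nat.dvd_sub h2 h1
  have hq1 : p ∣ q - 1 := ((hpp.dvd_mul).mp hsub).resolve_right hpk
  have hpN : p ∣ N := ((hpp.dvd_mul).mp hNk).resolve_right hpk
  have hN3 : p ∣ N - 3 := by
    have : N - 3 = (q - 1) * (q + 2) := by
      set m := q - 1 with hm
      have hqm : q = m + 1 := by omega
      rw [hNdef, hqm]
      have e1 : (m + 1) ^ 2 = m * m + 2 * m + 1 := by ring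
      have e2 : m * (m + 1 + 2) = m * m + 3 * m := by ring
      omega
    exact this ▸ hq1.mul_right _
  have hNge : 3 ≤ N := by subst hNdef; nlinarith
  have hp3 : p ∣ 3 := by
    have : N - (N - 3) = 3 := by omega
    exact this ▸ Nat.dvd_sub hpN hN3
  have : p = 3 := (Nat.prime_dvd_prime_iff_eq hpp (by norm_num)).mp hp3
  exact h3 (this ▸ hq1)
end
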